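/- Let C be a rational polytope contained in a real vector space V of dimension n which is defined over the rationals (with a fixed rational lattice, so one may take V = ℝ^n with lattice ℤ^n and the sup norm). Fix a positive integer k and a positive real number α. Then for every v ∈ C there exist points v_1,…,v_p ∈ C and positive integers m_1,…,m_p, each divisible by k, such that v is a convex linear combination of v_1,…,v_p, each (m_i/k)·v_i is an integral vector, and ‖v_i − v‖ < α/m_i for every i. -/

import Mathlib

/-!
Write `v = ∑ λₓ x` with barycentric coordinates `λ` on the vertex set `T`. It suffices to write
`λ` as a convex combination of rational points `a / q` with `q ‖a / q - λ‖ ≤ ε`: for small `ε`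
these lie in the standard simplex, and their images are points of `C` that work with
`m = k N q`, where `N` is a common denominator of the vertices.

The residuals `q λ - a` (`q ≥ 1`, `a` integral) form an additive semigroup `R` whose closure
contains `0` and `-r` for every `r ∈ R`, by simultaneous Dirichlet approximation of `λ` and of
`r`. Choose a basis `bᵢ` of the span of the residuals of norm `≤ ε / 2` among these residuals,
and residuals `uᵢ` close to `-bᵢ`. Then `g = ∑ (bᵢ + uᵢ)` is a small residual, so
`g = ∑ cᵢ bᵢ` with `|cᵢ| < 1`, and `∑ (1 - cᵢ) bᵢ + ∑ uᵢ = 0` exhibits `0` as a convex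
combination of residuals of norm `≤ ε`.
-/

open Set Metric Finset

theorem zero_mem_convexHull_of_sum_smul_eq_zero {𝕜 ι E : Type*} [Field 𝕜] [LinearOrder 𝕜]
    [IsStrictOrderedRing 𝕜] [Fintype ι] [AddCommGroup E] [Module 𝕜 E] {s : Set E}
    {w : ι → 𝕜} {z : ι → E} (hw₀ : ∀ i, 0 ≤ w i) (hw : 0 < ∑ i, w i) (hz : ∀ i, z i ∈ s)
    (h : ∑ i, w i • z i = 0) : (0 : E) ∈ convexHull 𝕜 s := by
  have := univ.centerMass_mem_convexHull (fun i _ => hw₀ i) hw (fun i _ => hz i)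
  rwa [Finset.centerMass, h, smul_zero] at this

theorem LinearIndependent.exists_norm_repr_lt_one {ι E : Type*} [Fintype ι]
    [NormedAddCommGroup E] [NormedSpace ℝ E] {b : ι → E} (hb : LinearIndependent ℝ b) :
    ∃ η > 0, ∀ g ∈ Submodule.span ℝ (range b), ‖g‖ < η →
      ∃ c : ι → ℝ, ‖c‖ < 1 ∧ ∑ i, c i • b i = g := by
  let B := Module.Basis.span hb
  obtain ⟨η, hη, hL⟩ := Metric.continuousAt_iff.1 B.equivFunL.continuous.continuousAt 1 one_pos
  refine ⟨η, hη, fun g hg hgη => ⟨B.equivFunL ⟨g, hg⟩, ?_, ?_⟩⟩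
  · have := hL (x := ⟨g, hg⟩) (by rwa [dist_zero_right])
    rwa [map_zero, dist_zero_right] at this
  · have := congrArg Subtype.val (B.sum_equivFun ⟨g, hg⟩)
    simpa [B] using this

theorem LinearIndependent.exists_pos_zero_mem_convexHull_union {ι E : Type*} [Fintype ι]
    [Nonempty ι] [NormedAddCommGroup E] [NormedSpace ℝ E] {b : ι → E} (hb : LinearIndependent ℝ b) :
    ∃ η > 0, ∀ u : ι → E, ∑ i, (b i + u i) ∈ Submodule.span ℝ (range b) →
      ‖∑ i, (b i + u i)‖ < η → (0 : E) ∈ convexHull ℝ (range b ∪ range u) := by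
  obtain ⟨η, hη, hcoord⟩ := hb.exists_norm_repr_lt_one
  refine ⟨η, hη, fun u hspan hsmall => ?_⟩
  obtain ⟨c, hc, hgc⟩ := hcoord _ hspan hsmall
  have hc1 : ∀ i, 0 < 1 - c i := fun i =>
    sub_pos.2 <| (le_abs_self _).trans_lt ((norm_le_pi_norm c i).trans_lt hc)
  -- `∑ (1 - c i) • b i + ∑ u i = ∑ (b i + u i) - ∑ c i • b i = 0`
  refine zero_mem_convexHull_of_sum_smul_eq_zero (w := Sum.elim (1 - c) 1)
    (z := Sum.elim b u) ?_ ?_ ?_ ?_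
  · rintro (i | i)
    · exact (hc1 i).le
    · exact zero_le_one
  · rw [Fintype.sum_sum_type]
    exact add_pos_of_pos_of_nonneg (sum_pos (fun i _ => hc1 i) univ_nonempty)
      (sum_nonneg fun _ _ => zero_le_one)
  · rintro (i | i)
    · exact Or.inl (mem_range_self i)
    · exact Or.inr (mem_range_self i)
  · simp only [Fintype.sum_sum_type, Sum.elim_inl, Sum.elim_inr, Pi.sub_apply, Pi.one_apply,
      sub_smul, one_smul, sum_sub_distrib, hgc, sum_add_distrib]
    abel

theorem zero_mem_convexHull_of_linearIndependent {ι E : Type*} [Fintype ι] [Nonempty ι]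
    [NormedAddCommGroup E] [NormedSpace ℝ E] {R : AddSubsemigroup E}
    (hneg : ∀ r ∈ R, -r ∈ closure (R : Set E)) {ε : ℝ} (hε : 0 < ε) {b : ι → E}
    (hb : LinearIndependent ℝ b) (hbR : ∀ i, b i ∈ (R : Set E) ∩ closedBall 0 (ε / 2))
    (hspan : (R : Set E) ∩ closedBall 0 (ε / 2) ⊆ Submodule.span ℝ (range b)) :
    (0 : E) ∈ convexHull ℝ ((R : Set E) ∩ closedBall 0 ε) := by
  obtain ⟨η, hη, hb0⟩ := hb.exists_pos_zero_mem_convexHull_union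
  set δ := min (ε / 2) η / (Fintype.card ι + 1)
  have hδ : 0 < δ := by positivity
  have hδε : δ ≤ ε / 2 :=
    (div_le_self (lt_min (half_pos hε) hη).le (by linarith)).trans (min_le_left _ _)
  choose u huR hu using fun i => Metric.mem_closure_iff.1 (hneg (b i) (hbR i).1) δ hδ
  have hbu : ∀ i, ‖b i + u i‖ < δ := fun i => by
    rw [← norm_neg, neg_add']
    simpa [dist_eq_norm] using hu i
  have hR : ∑ i, (b i + u i) ∈ R := Finset.sum_induction_nonempty _ (· ∈ R)
    (fun _ _ => R.add_mem) univ_nonempty fun i _ => R.add_mem (hbR i).1 (huR i)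
  have hsmall : ‖∑ i, (b i + u i)‖ < min (ε / 2) η := calc
    ‖∑ i, (b i + u i)‖ ≤ ∑ i, ‖b i + u i‖ := norm_sum_le _ _
    _ ≤ ∑ _i : ι, δ := sum_le_sum fun i _ => (hbu i).le
    _ = Fintype.card ι * δ := by simp
    _ < min (ε / 2) η := by
      rw [mul_div_assoc', div_lt_iff₀ (by positivity)]
      nlinarith [lt_min (half_pos hε) hη]
  refine convexHull_mono (union_subset ?_ ?_) (hb0 u
    (hspan ⟨hR, mem_closedBall_zero_iff.2 (hsmall.le.trans (min_le_left _ _))⟩)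
    (hsmall.trans_le (min_le_right _ _)))
  · rintro _ ⟨i, rfl⟩
    exact ⟨(hbR i).1, closedBall_subset_closedBall (by linarith) (hbR i).2⟩
  · rintro _ ⟨i, rfl⟩
    refine ⟨huR i, mem_closedBall_zero_iff.2 ?_⟩
    have hbi : ‖b i‖ ≤ ε / 2 := mem_closedBall_zero_iff.1 (hbR i).2
    calc ‖u i‖ = ‖(b i + u i) - b i‖ := by rw [add_sub_cancel_left]
      _ ≤ ‖b i + u i‖ + ‖b i‖ := norm_sub_le _ _
      _ ≤ ε := by linarith [hbu i]

theorem zero_mem_convexHull_inter_closedBall_of_neg_mem_closure {E : Type*}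
    [NormedAddCommGroup E] [NormedSpace ℝ E] [FiniteDimensional ℝ E] {R : AddSubsemigroup E}
    (h0 : (0 : E) ∈ closure (R : Set E)) (hneg : ∀ r ∈ R, -r ∈ closure (R : Set E))
    {ε : ℝ} (hε : 0 < ε) :
    (0 : E) ∈ convexHull ℝ ((R : Set E) ∩ closedBall 0 ε) := by
  set S := (R : Set E) ∩ closedBall 0 (ε / 2)
  obtain ⟨B, hBS, hspan, hB⟩ := exists_linearIndependent ℝ S
  have : Fintype B := hB.setFinite.fintype
  have hSB : S ⊆ Submodule.span ℝ (range ((↑) : B → E)) := by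
    rw [Subtype.range_coe, hspan]
    exact Submodule.subset_span
  rcases isEmpty_or_nonempty B with hBe | hBne
  · obtain ⟨r, hrR, hr⟩ := Metric.mem_closure_iff.1 h0 (ε / 2) (half_pos hε)
    have hrS : r ∈ S := ⟨hrR, by rw [mem_closedBall, dist_comm]; exact hr.le⟩
    have hr0 : r = 0 := by
      simpa only [range_eq_empty, Submodule.span_empty, SetLike.mem_coe, Submodule.mem_bot]
        using hSB hrS
    exact subset_convexHull ℝ _
      ⟨hr0 ▸ hrR, closedBall_subset_closedBall (by linarith) (hr0 ▸ hrS.2)⟩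
  exact zero_mem_convexHull_of_linearIndependent hneg hε hB (fun b => hBS b.2) hSB

theorem exists_nat_norm_smul_sub_intCast_lt {ι : Type*} [Fintype ι] (x : ι → ℝ) {δ : ℝ}
    (hδ : 0 < δ) :
    ∃ q : ℕ, 0 < q ∧ ∃ a : ι → ℤ, ‖(q : ℝ) • x - (fun i => (a i : ℝ))‖ < δ := by
  let u : ℕ → ι → ℝ := fun m i => Int.fract (m * x i)
  have hu : ∀ m, u m ∈ closedBall 0 1 := fun m => by
    refine mem_closedBall_zero_iff.2 <| (pi_norm_le_iff_of_nonneg zero_le_one).2 fun i => ?_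
    rw [Real.norm_eq_abs, abs_of_nonneg (Int.fract_nonneg _)]
    exact (Int.fract_lt_one _).le
  obtain ⟨_, _, φ, hφ, hlim⟩ := tendsto_subseq_of_bounded isBounded_closedBall hu
  obtain ⟨N, hN⟩ := Metric.cauchySeq_iff'.1 hlim.cauchySeq δ hδ
  have hlt : φ N < φ (N + 1) := hφ N.lt_succ_self
  refine ⟨φ (N + 1) - φ N, by omega, fun i => ⌊φ (N + 1) * x i⌋ - ⌊φ N * x i⌋, ?_⟩
  have hdiff : ((φ (N + 1) - φ N : ℕ) : ℝ) • x -
      (fun i => ((⌊φ (N + 1) * x i⌋ - ⌊φ N * x i⌋ : ℤ) : ℝ)) = u (φ (N + 1)) - u (φ N) := by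
    funext i
    simp only [Pi.sub_apply, Pi.smul_apply, smul_eq_mul, u, Int.fract]
    push_cast [Nat.cast_sub hlt.le]
    ring
  rw [hdiff, ← dist_eq_norm]
  exact hN (N + 1) N.le_succ

def residuals {ι : Type*} (x : ι → ℝ) : AddSubsemigroup (ι → ℝ) where
  carrier := {r | ∃ q : ℕ, 0 < q ∧ ∃ a : ι → ℤ, (q : ℝ) • x - (fun i => (a i : ℝ)) = r}
  add_mem' := by
    rintro _ _ ⟨q, hq, a, rfl⟩ ⟨q', hq', a', rfl⟩
    refine ⟨q + q', by omega, a + a', ?_⟩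
    funext i
    simp only [Pi.add_apply, Pi.sub_apply, Pi.smul_apply, smul_eq_mul]
    push_cast
    ring

section Approximation

variable {ι : Type*} [Fintype ι]

theorem zero_mem_closure_residuals (x : ι → ℝ) :
    (0 : ι → ℝ) ∈ closure (residuals x : Set (ι → ℝ)) := by
  refine Metric.mem_closure_iff.2 fun δ hδ => ?_
  obtain ⟨q, hq, a, hqa⟩ := exists_nat_norm_smul_sub_intCast_lt x hδ
  exact ⟨_, ⟨q, hq, a, rfl⟩, by rwa [dist_zero_left]⟩

theorem neg_mem_closure_residuals {x r : ι → ℝ} (hr : r ∈ residuals x) :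
    -r ∈ closure (residuals x : Set (ι → ℝ)) := by
  obtain ⟨q, hq, a, rfl⟩ := hr
  refine Metric.mem_closure_iff.2 fun δ hδ => ?_
  obtain ⟨q₀, hq₀, b, hb⟩ :=
    exists_nat_norm_smul_sub_intCast_lt ((q : ℝ) • x - fun i => (a i : ℝ)) (half_pos hδ)
  obtain ⟨q₁, rfl⟩ := Nat.exists_eq_add_one_of_ne_zero hq₀.ne'
  -- `(2 q₀ - 1) r - 2 b` lies in `residuals x` and differs from `-r` by `2 (q₀ r - b)`
  refine ⟨_, ⟨(2 * q₁ + 1) * q, by positivity, fun i => (2 * q₁ + 1) * a i + 2 * b i, rfl⟩, ?_⟩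
  have hdiff : -((q : ℝ) • x - (fun i => (a i : ℝ))) -
      ((((2 * q₁ + 1) * q : ℕ) : ℝ) • x - fun i => (((2 * q₁ + 1) * a i + 2 * b i : ℤ) : ℝ)) =
      (-2 : ℝ) • (((q₁ + 1 : ℕ) : ℝ) • ((q : ℝ) • x - (fun i => (a i : ℝ))) -
        fun i => (b i : ℝ)) := by
    funext i
    simp only [Pi.sub_apply, Pi.smul_apply, Pi.neg_apply, smul_eq_mul]
    push_cast
    ring
  rw [dist_eq_norm, hdiff, norm_smul, Real.norm_of_nonpos (by norm_num)]
  linarith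

theorem zero_mem_convexHull_residuals_inter_closedBall (x : ι → ℝ) {ε : ℝ} (hε : 0 < ε) :
    (0 : ι → ℝ) ∈ convexHull ℝ ((residuals x : Set (ι → ℝ)) ∩ closedBall 0 ε) :=
  zero_mem_convexHull_inter_closedBall_of_neg_mem_closure (zero_mem_closure_residuals x)
    (fun _ => neg_mem_closure_residuals) hε

def approximants (x : ι → ℝ) (ε : ℝ) : Set (ι → ℝ) :=
  {y | ∃ q : ℕ, 0 < q ∧ (∀ i, ∃ a : ℤ, q * y i = a) ∧ q * ‖y - x‖ ≤ ε}

theorem mem_convexHull_approximants (x : ι → ℝ) {ε : ℝ} (hε : 0 < ε) :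
    x ∈ convexHull ℝ (approximants x ε) := by
  obtain ⟨κ, _, w, r, hw₀, hw₁, hr, hwr⟩ :=
    mem_convexHull_iff_exists_fintype.1 (zero_mem_convexHull_residuals_inter_closedBall x hε)
  choose q hq a ha using fun j => (hr j).1
  have hq' : ∀ j, (q j : ℝ) ≠ 0 := fun j => Nat.cast_ne_zero.2 (hq j).ne'
  -- `∑ w j • (q j • x - a j) = 0` makes `x` the centre of mass of the `a j / q j` with weights
  -- `w j * q j`
  set y : κ → ι → ℝ := fun j => (q j : ℝ)⁻¹ • fun i => (a j i : ℝ)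
  have hy : ∀ j, (q j : ℝ) • y j = fun i => (a j i : ℝ) := fun j => smul_inv_smul₀ (hq' j) _
  have hW : 0 < ∑ j, w j * q j := by
    refine zero_lt_one.trans_le (hw₁ ▸ sum_le_sum fun j _ => ?_)
    exact le_mul_of_one_le_right (hw₀ j) (Nat.one_le_cast.2 (hq j))
  have hcm : univ.centerMass (fun j => w j * q j) y = x := by
    have : ∑ j, (w j * q j) • y j = (∑ j, w j * q j) • x := by
      calc ∑ j, (w j * q j) • y j = ∑ j, w j • ((q j : ℝ) • x - r j) := by
            simp_rw [← ha, sub_sub_cancel, mul_smul, hy]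
        _ = (∑ j, w j * q j) • x := by
            simp_rw [smul_sub, sum_sub_distrib, hwr, sub_zero, smul_smul, sum_smul]
    rw [Finset.centerMass, this, inv_smul_smul₀ hW.ne']
  have hyA : ∀ j, y j ∈ approximants x ε := fun j => by
    refine ⟨q j, hq j, fun i => ⟨a j i, by simpa using congrFun (hy j) i⟩, ?_⟩
    rw [← Real.norm_natCast, ← norm_smul, smul_sub, hy, ← norm_neg, neg_sub, ha j]
    exact mem_closedBall_zero_iff.1 (hr j).2
  have := Finset.univ.centerMass_mem_convexHull
    (fun j _ => mul_nonneg (hw₀ j) (Nat.cast_nonneg _)) hW fun j _ => hyA j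
  rwa [hcm] at this

theorem approximants_subset_stdSimplex {x : ι → ℝ} (hx : x ∈ stdSimplex ℝ ι) {ε : ℝ}
    (hε : Fintype.card ι * ε < 1) : approximants x ε ⊆ stdSimplex ℝ ι := by
  rintro y ⟨q, hq, hya, hyx⟩
  choose a ha using hya
  have hqR : (0 : ℝ) < q := Nat.cast_pos.2 hq
  have hdev : ∀ i, |(a i : ℝ) - q * x i| ≤ ε := fun i => by
    rw [← ha, ← mul_sub, abs_mul, Nat.abs_cast, ← Real.norm_eq_abs]
    exact (mul_le_mul_of_nonneg_left (norm_le_pi_norm (y - x) i) hqR.le).trans hyx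
  have hcard : (1 : ℝ) ≤ Fintype.card ι :=
    Nat.one_le_cast.2 (card_pos.2 (nonempty_of_sum_ne_zero (hx.2.symm ▸ one_ne_zero)))
  refine ⟨fun i => ?_, ?_⟩
  · have hε1 : ε < 1 := by nlinarith
    have hai : (-1 : ℤ) < a i := by
      have := (abs_le.1 (hdev i)).1
      have := mul_nonneg hqR.le (hx.1 i)
      exact_mod_cast (by linarith : (-1 : ℝ) < a i)
    have : (0 : ℝ) ≤ a i := by exact_mod_cast (by omega : (0 : ℤ) ≤ a i)
    exact (mul_nonneg_iff_of_pos_left hqR).1 (ha i ▸ this)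
  · have hsum : |((∑ i, a i - q : ℤ) : ℝ)| < 1 := by
      have : ((∑ i, a i - q : ℤ) : ℝ) = ∑ i, ((a i : ℝ) - q * x i) := by
        push_cast
        rw [sum_sub_distrib, ← mul_sum, hx.2, mul_one]
      rw [this]
      calc _ ≤ ∑ i, |(a i : ℝ) - q * x i| := abs_sum_le_sum_abs _ _
        _ ≤ ∑ _i : ι, ε := sum_le_sum fun i _ => hdev i
        _ < 1 := by simpa using hε
    have : ∑ i, a i = q := by
      have := abs_lt.1 (show |∑ i, a i - q| < 1 by exact_mod_cast hsum)
      omega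
    have hqy : (q : ℝ) * ∑ i, y i = q := by
      rw [mul_sum]
      simp_rw [ha]
      exact_mod_cast this
    exact (mul_eq_left₀ hqR.ne').1 hqy

end Approximation

theorem convexHull_range_eq_image_stdSimplex {κ E : Type*} [Fintype κ] [AddCommGroup E]
    [Module ℝ E] (p : κ → E) :
    convexHull ℝ (range p) = Fintype.linearCombination ℝ p '' stdSimplex ℝ κ := by
  classical
  rw [← convexHull_basis_eq_stdSimplex, LinearMap.image_convexHull, ← range_comp]
  congr
  funext i
  simp [Fintype.linearCombination_apply, ite_smul]

theorem exists_fin_of_mem_convexHull {E : Type*} [AddCommGroup E] [Module ℝ E] {s : Set E}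
    {x : E} (hx : x ∈ convexHull ℝ s) :
    ∃ (p : ℕ) (z : Fin p → E) (t : Fin p → ℝ), (∀ i, z i ∈ s) ∧ (∀ i, 0 ≤ t i) ∧
      ∑ i, t i = 1 ∧ x = ∑ i, t i • z i := by
  obtain ⟨κ, _, w, z, hw₀, hw₁, hz, rfl⟩ := mem_convexHull_iff_exists_fintype.1 hx
  let e := (Fintype.equivFin κ).symm
  exact ⟨_, z ∘ e, w ∘ e, fun i => hz _, fun i => hw₀ _, by simpa [e.sum_comp] using hw₁,
    (e.sum_comp fun j => w j • z j).symm⟩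

theorem exists_nat_mul_eq_intCast {κ : Type*} [Fintype κ] {f : κ → ℝ}
    (hf : ∀ j, ∃ q : ℚ, f j = q) : ∃ N : ℕ, 0 < N ∧ ∀ j, ∃ z : ℤ, N * f j = z := by
  choose g hg using hf
  refine ⟨∏ j, (g j).den, prod_pos fun j _ => (g j).den_pos, fun j => ?_⟩
  obtain ⟨m, hm⟩ := dvd_prod_of_mem (fun j => (g j).den) (mem_univ j)
  refine ⟨m * (g j).num, ?_⟩
  have hnum : ((g j).den : ℝ) * g j = (g j).num := by exact_mod_cast Rat.den_mul_eq_num (g j)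
  rw [hg, hm]
  push_cast
  rw [← hnum]
  ring

theorem exists_intCast_eq_mul_linearCombination {κ ι : Type*} [Fintype κ] {p : κ → ι → ℝ}
    {N : ℕ} (hp : ∀ x j, ∃ z : ℤ, N * p x j = z) {y : κ → ℝ} {q : ℕ}
    (hy : ∀ x, ∃ a : ℤ, q * y x = a) (j : ι) :
    ∃ z : ℤ, (N * q : ℝ) * Fintype.linearCombination ℝ p y j = z := by
  choose b hb using hp
  choose a ha using hy
  refine ⟨∑ x, a x * b x j, ?_⟩
  simp only [Fintype.linearCombination_apply, Finset.sum_apply, Pi.smul_apply, smul_eq_mul,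
    mul_sum]
  push_cast
  refine sum_congr rfl fun x _ => ?_
  rw [← ha, ← hb]
  ring

theorem image_approximants_subset {κ ι : Type*} [Fintype κ] [Fintype ι] {p : κ → ι → ℝ}
    {k N : ℕ} (hk : 0 < k) (hN : 0 < N) (hp : ∀ x j, ∃ z : ℤ, N * p x j = z) {lam : κ → ℝ}
    (hlam : lam ∈ stdSimplex ℝ κ) {α ε : ℝ} (hεκ : Fintype.card κ * ε < 1)
    (hεα : ‖(Fintype.linearCombination ℝ p).toContinuousLinearMap‖ * (k * N) * ε < α) :
    Fintype.linearCombination ℝ p '' approximants lam ε ⊆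
      {w | w ∈ convexHull ℝ (range p) ∧ ∃ m : ℕ, (0 < m ∧ k ∣ m) ∧
        (∀ j, ∃ z : ℤ, ((m : ℝ) / k) * w j = z) ∧
        ‖w - Fintype.linearCombination ℝ p lam‖ < α / m} := by
  set L := Fintype.linearCombination ℝ p
  rintro _ ⟨y, hy, rfl⟩
  have hyS : y ∈ stdSimplex ℝ κ := approximants_subset_stdSimplex hlam hεκ hy
  obtain ⟨q, hq, hyq, hyε⟩ := hy
  refine ⟨convexHull_range_eq_image_stdSimplex p ▸ mem_image_of_mem L hyS, k * (N * q),
    ⟨by positivity, dvd_mul_right _ _⟩, fun j => ?_, ?_⟩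
  · rw [Nat.cast_mul, mul_div_cancel_left₀ _ (Nat.cast_ne_zero.2 hk.ne'), Nat.cast_mul]
    exact exists_intCast_eq_mul_linearCombination hp hyq j
  · have hm : (0 : ℝ) < ((k * (N * q) : ℕ) : ℝ) := by positivity
    rw [lt_div_iff₀ hm, ← map_sub]
    calc ‖L (y - lam)‖ * ((k * (N * q) : ℕ) : ℝ)
        ≤ ‖L.toContinuousLinearMap‖ * ‖y - lam‖ * ((k * (N * q) : ℕ) : ℝ) :=
          mul_le_mul_of_nonneg_right (L.toContinuousLinearMap.le_opNorm _) hm.le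
      _ = ‖L.toContinuousLinearMap‖ * (k * N) * (q * ‖y - lam‖) := by push_cast; ring
      _ ≤ ‖L.toContinuousLinearMap‖ * (k * N) * ε :=
          mul_le_mul_of_nonneg_left hyε (by positivity)
      _ < α := hεα

/-- **BCHM, Lemma 3.7.7 (Diophantine approximation).**  Let `C` be a rational polytope
in `ℝⁿ` (with the rational lattice `ℤⁿ` and the sup norm), realised as the convex hull
of a finite set `T` of rational points.  Fix a positive integer `k` and a positive real
`α`.  Then for every `v ∈ C` there are points `v₁, …, v_p ∈ C` and positive integers
`m₁, …, m_p`, each divisible by `k`, such that `v` is a convex linear combination of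
the `vᵢ`, each `(mᵢ/k)·vᵢ` is integral, and `‖vᵢ - v‖ < α/mᵢ` for every `i`. -/
theorem diophantine_approximation_in_rational_polytope {n : ℕ} (k : ℕ) (hk : 0 < k)
    (α : ℝ) (hα : 0 < α) (T : Finset (Fin n → ℝ))
    (hT : ∀ x ∈ T, ∀ i, ∃ q : ℚ, x i = (q : ℝ))
    (v : Fin n → ℝ) (hv : v ∈ convexHull ℝ (T : Set (Fin n → ℝ))) :
    ∃ (p : ℕ) (vs : Fin p → (Fin n → ℝ)) (ms : Fin p → ℕ),
      (∀ i, vs i ∈ convexHull ℝ (T : Set (Fin n → ℝ))) ∧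
      (∀ i, 0 < ms i ∧ k ∣ ms i) ∧
      (∃ t : Fin p → ℝ, (∀ i, 0 ≤ t i) ∧ ∑ i, t i = 1 ∧ v = ∑ i, t i • vs i) ∧
      (∀ i j, ∃ z : ℤ, ((ms i : ℝ) / (k : ℝ)) * vs i j = (z : ℝ)) ∧
      (∀ i, ‖vs i - v‖ < α / (ms i : ℝ)) := by
  let L := Fintype.linearCombination ℝ ((↑) : T → Fin n → ℝ)
  obtain ⟨N, hN, hNT⟩ := exists_nat_mul_eq_intCast (f := fun xj : T × Fin n => xj.1.1 xj.2)
    fun xj => hT _ xj.1.2 _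
  rw [← Subtype.range_coe (s := (T : Set (Fin n → ℝ)))] at hv ⊢
  obtain ⟨lam, hlam, rfl⟩ := convexHull_range_eq_image_stdSimplex ((↑) : T → Fin n → ℝ) ▸ hv
  obtain ⟨ε₁, hε₁, hε₁T⟩ := exists_pos_mul_lt one_pos (Fintype.card T : ℝ)
  obtain ⟨ε₂, hε₂, hε₂L⟩ := exists_pos_mul_lt hα (‖L.toContinuousLinearMap‖ * (k * N))
  have hgood := image_approximants_subset hk hN (fun x j => hNT (x, j)) hlam
    ((mul_le_mul_of_nonneg_left (min_le_left ε₁ ε₂) (Nat.cast_nonneg _)).trans_lt hε₁T)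
    ((mul_le_mul_of_nonneg_left (min_le_right ε₁ ε₂) (by positivity)).trans_lt hε₂L)
  have hv' := LinearMap.image_convexHull L _ ▸
    mem_image_of_mem L (mem_convexHull_approximants lam (lt_min hε₁ hε₂))
  obtain ⟨p, vs, t, hvs, ht₀, ht₁, hsum⟩ := exists_fin_of_mem_convexHull (convexHull_mono hgood hv')
  choose ms hms using fun i => (hvs i).2
  exact ⟨p, vs, ms, fun i => (hvs i).1, fun i => (hms i).1, ⟨t, ht₀, ht₁, hsum⟩,
    fun i => (hms i).2.1, fun i => (hms i).2.2⟩
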